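/- (Lemma for Leggett–Garg Δ' bounds, direct part.) For every coupling of the six variables, Δ' satisfies: Δ' ≥ −½ + ½·s₁(⟨X₁₂Y₁₂⟩, ⟨X₁₃Z₁₃⟩, ⟨Y₂₃Z₂₃⟩); Δ' ≥ ½(|⟨X₁₂⟩−⟨X₁₃⟩| + |⟨Y₁₂⟩−⟨Y₂₃⟩| + |⟨Z₁₃⟩−⟨Z₂₃⟩|); Δ' ≤ 3 − [−½ + ½·s₀(⟨X₁₂Y₁₂⟩, ⟨X₁₃Z₁₃⟩, ⟨Y₂₃Z₂₃⟩)]; and Δ' ≤ 3 − ½(|⟨X₁₂⟩+⟨X₁₃⟩| + |⟨Y₁₂⟩+⟨Y₂₃⟩| + |⟨Z₁₃⟩+⟨Z₂₃⟩|), where s₀(a,b,c) = max{±a±b±c : the number of minus signs is even} and s₁(a,b,c) = max{±a±b±c : the number of minus signs is odd}. -/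
import Mathlib


open Finset

noncomputable section

/-- The ±1 value encoded by a Boolean: `true ↦ 1`, `false ↦ -1`. -/
def pm1 (b : Bool) : ℝ := if b then 1 else -1

/-- A joint probability distribution of two ±1-valued random variables,
encoded as a distribution on `Bool × Bool` (with `pm1` giving the ±1 values). -/
structure PairDist where
  p : Bool → Bool → ℝ
  nonneg : ∀ a b, 0 ≤ p a b
  total : (∑ a, ∑ b, p a b) = 1

/-- The expectation of the first variable. -/
def PairDist.expA (d : PairDist) : ℝ := ∑ a, ∑ b, pm1 a * d.p a b

/-- The expectation of the second variable. -/
def PairDist.expB (d : PairDist) : ℝ := ∑ a, ∑ b, pm1 b * d.p a b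

/-- The expectation of the product of the two variables. -/
def PairDist.expAB (d : PairDist) : ℝ := ∑ a, ∑ b, (pm1 a * pm1 b) * d.p a b

/-- A configuration of the six variables, indexed as
0 ↦ X₁₂, 1 ↦ X₁₃, 2 ↦ Y₁₂, 3 ↦ Y₂₃, 4 ↦ Z₁₃, 5 ↦ Z₂₃. -/
abbrev Cfg6 := Fin 6 → Bool

/-- `μ` is a coupling of the six variables: a probability distribution on {−1,1}⁶
whose marginals on the pairs (X₁₂,Y₁₂), (X₁₃,Z₁₃), (Y₂₃,Z₂₃) are the given
distributions `dXY`, `dXZ`, `dYZ`. -/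
def IsLGCoupling (dXY dXZ dYZ : PairDist) (μ : Cfg6 → ℝ) : Prop :=
  (∀ f, 0 ≤ μ f) ∧ (∑ f, μ f) = 1 ∧
    (∀ a b, (∑ f, if f 0 = a ∧ f 2 = b then μ f else 0) = dXY.p a b) ∧
    (∀ a b, (∑ f, if f 1 = a ∧ f 4 = b then μ f else 0) = dXZ.p a b) ∧
    (∀ a b, (∑ f, if f 3 = a ∧ f 5 = b then μ f else 0) = dYZ.p a b)

/-- Pr[X₁₂ ≠ X₁₃]. -/
def prNeX (μ : Cfg6 → ℝ) : ℝ := ∑ f, if f 0 ≠ f 1 then μ f else 0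
/-- Pr[Y₁₂ ≠ Y₂₃]. -/
def prNeY (μ : Cfg6 → ℝ) : ℝ := ∑ f, if f 2 ≠ f 3 then μ f else 0
/-- Pr[Z₁₃ ≠ Z₂₃]. -/
def prNeZ (μ : Cfg6 → ℝ) : ℝ := ∑ f, if f 4 ≠ f 5 then μ f else 0

/-- Δ' = Pr[X₁₂≠X₁₃] + Pr[Y₁₂≠Y₂₃] + Pr[Z₁₃≠Z₂₃]. -/
def Δ' (μ : Cfg6 → ℝ) : ℝ := prNeX μ + prNeY μ + prNeZ μ

/-- Δ'₀ = ½(|⟨X₁₂⟩−⟨X₁₃⟩| + |⟨Y₁₂⟩−⟨Y₂₃⟩| + |⟨Z₁₃⟩−⟨Z₂₃⟩|).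
Here ⟨X₁₂⟩ = dXY.expA, ⟨X₁₃⟩ = dXZ.expA, ⟨Y₁₂⟩ = dXY.expB, ⟨Y₂₃⟩ = dYZ.expA,
⟨Z₁₃⟩ = dXZ.expB, ⟨Z₂₃⟩ = dYZ.expB. -/
def Δ'0 (dXY dXZ dYZ : PairDist) : ℝ :=
  (|dXY.expA - dXZ.expA| + |dXY.expB - dYZ.expA| + |dXZ.expB - dYZ.expB|) / 2
/-- s₀(a,b,c): max of ±a±b±c over sign patterns with an even number of minuses. -/
def s0three (a b c : ℝ) : ℝ :=
  max (max (a + b + c) (a - b - c)) (max (-a + b - c) (-a - b + c))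

/-- s₁(a,b,c): max of ±a±b±c over sign patterns with an odd number of minuses. -/
def s1three (a b c : ℝ) : ℝ :=
  max (max (-a + b + c) (a - b + c)) (max (a + b - c) (-a - b - c))
def indR (a b : Bool) : ℝ := if a = b then 0 else 1
def qZ (b : Bool) : ℤ := if b then 1 else -1
def indZ (a b : Bool) : ℤ := if a = b then 0 else 1
lemma ptZ : ∀ s t u x0 x1 y0 y1 z0 z1 : Bool,
    qZ s * (qZ x0 * qZ y0) + qZ t * (qZ x1 * qZ z0) + qZ u * (qZ y1 * qZ z1) ≤
      4 + 3 * (qZ s * qZ t * qZ u) -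
        2 * (qZ s * qZ t * qZ u) * (indZ x0 x1 + indZ y0 y1 + indZ z0 z1) := by decide
lemma pm1_cast (b : Bool) : pm1 b = ((qZ b : ℤ) : ℝ) := by cases b <;> simp [pm1, qZ]
lemma indR_cast (a b : Bool) : indR a b = ((indZ a b : ℤ) : ℝ) := by
  by_cases h : a = b <;> simp [indR, indZ, h]
lemma ptR (s t u x0 x1 y0 y1 z0 z1 : Bool) :
    pm1 s * (pm1 x0 * pm1 y0) + pm1 t * (pm1 x1 * pm1 z0) + pm1 u * (pm1 y1 * pm1 z1) ≤
      4 + 3 * (pm1 s * pm1 t * pm1 u) -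
        2 * (pm1 s * pm1 t * pm1 u) * (indR x0 x1 + indR y0 y1 + indR z0 z1) := by
  simp only [pm1_cast, indR_cast]
  exact_mod_cast ptZ s t u x0 x1 y0 y1 z0 z1
lemma abs_pm1_sub (a b : Bool) : |pm1 a - pm1 b| ≤ 2 * indR a b := by
  cases a <;> cases b <;> norm_num [pm1, indR]
lemma abs_pm1_add (a b : Bool) : |pm1 a + pm1 b| ≤ 2 - 2 * indR a b := by
  cases a <;> cases b <;> norm_num [pm1, indR]
lemma marg_sum (μ : Cfg6 → ℝ) (i j : Fin 6) (p : Bool → Bool → ℝ)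
    (h : ∀ a b, (∑ f, if f i = a ∧ f j = b then μ f else 0) = p a b)
    (g : Bool → Bool → ℝ) :
    (∑ a, ∑ b, g a b * p a b) = ∑ f, g (f i) (f j) * μ f := by
  calc (∑ a, ∑ b, g a b * p a b)
      = ∑ a, ∑ b, ∑ f, (if f i = a ∧ f j = b then g a b * μ f else 0) := by
        refine Finset.sum_congr rfl fun a _ => Finset.sum_congr rfl fun b _ => ?_
        rw [← h a b, Finset.mul_sum]
        exact Finset.sum_congr rfl fun f _ => by
          by_cases hf : f i = a ∧ f j = b <;> simp [hf]
    _ = ∑ a, ∑ f, ∑ b, (if f i = a ∧ f j = b then g a b * μ f else 0) :=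
        Finset.sum_congr rfl fun a _ => Finset.sum_comm
    _ = ∑ f, ∑ a, ∑ b, (if f i = a ∧ f j = b then g a b * μ f else 0) := Finset.sum_comm
    _ = ∑ f, g (f i) (f j) * μ f := Finset.sum_congr rfl fun f _ => by
        simp [ite_and, Finset.sum_ite_eq]

lemma prNeX_eq (μ : Cfg6 → ℝ) : prNeX μ = ∑ f, indR (f 0) (f 1) * μ f := by
  refine Finset.sum_congr rfl fun f _ => ?_
  by_cases h : f 0 = f 1 <;> simp [indR, h]
lemma prNeY_eq (μ : Cfg6 → ℝ) : prNeY μ = ∑ f, indR (f 2) (f 3) * μ f := by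
  refine Finset.sum_congr rfl fun f _ => ?_
  by_cases h : f 2 = f 3 <;> simp [indR, h]
lemma prNeZ_eq (μ : Cfg6 → ℝ) : prNeZ μ = ∑ f, indR (f 4) (f 5) * μ f := by
  refine Finset.sum_congr rfl fun f _ => ?_
  by_cases h : f 4 = f 5 <;> simp [indR, h]

lemma Δ'_eq (μ : Cfg6 → ℝ) :
    Δ' μ = ∑ f, (indR (f 0) (f 1) + indR (f 2) (f 3) + indR (f 4) (f 5)) * μ f := by
  rw [Δ', prNeX_eq, prNeY_eq, prNeZ_eq, ← Finset.sum_add_distrib, ← Finset.sum_add_distrib]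
  exact Finset.sum_congr rfl fun f _ => by ring

lemma affD (μ : Cfg6 → ℝ) (htot : (∑ f, μ f) = 1) (c d : ℝ) :
    c + d * Δ' μ =
      ∑ f, (c + d * (indR (f 0) (f 1) + indR (f 2) (f 3) + indR (f 4) (f 5))) * μ f := by
  calc c + d * Δ' μ
      = c * (∑ f, μ f) +
        d * ∑ f, (indR (f 0) (f 1) + indR (f 2) (f 3) + indR (f 4) (f 5)) * μ f := by
        rw [htot, ← Δ'_eq]; ring
    _ = (∑ f, c * μ f) +
        ∑ f, d * ((indR (f 0) (f 1) + indR (f 2) (f 3) + indR (f 4) (f 5)) * μ f) := by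
        rw [Finset.mul_sum, Finset.mul_sum]
    _ = _ := by
        rw [← Finset.sum_add_distrib]
        exact Finset.sum_congr rfl fun f _ => by ring

lemma bound_pattern (dXY dXZ dYZ : PairDist) (μ : Cfg6 → ℝ)
    (hμ : IsLGCoupling dXY dXZ dYZ μ) (s t u : Bool) :
    pm1 s * dXY.expAB + pm1 t * dXZ.expAB + pm1 u * dYZ.expAB ≤
      4 + 3 * (pm1 s * pm1 t * pm1 u) - 2 * (pm1 s * pm1 t * pm1 u) * Δ' μ := by
  obtain ⟨hpos, htot, hXY, hXZ, hYZ⟩ := hμ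
  have eXY : dXY.expAB = ∑ f, (pm1 (f 0) * pm1 (f 2)) * μ f :=
    marg_sum μ 0 2 dXY.p hXY (fun a b => pm1 a * pm1 b)
  have eXZ : dXZ.expAB = ∑ f, (pm1 (f 1) * pm1 (f 4)) * μ f :=
    marg_sum μ 1 4 dXZ.p hXZ (fun a b => pm1 a * pm1 b)
  have eYZ : dYZ.expAB = ∑ f, (pm1 (f 3) * pm1 (f 5)) * μ f :=
    marg_sum μ 3 5 dYZ.p hYZ (fun a b => pm1 a * pm1 b)
  have hL : pm1 s * dXY.expAB + pm1 t * dXZ.expAB + pm1 u * dYZ.expAB =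
      ∑ f, (pm1 s * (pm1 (f 0) * pm1 (f 2)) + pm1 t * (pm1 (f 1) * pm1 (f 4)) +
        pm1 u * (pm1 (f 3) * pm1 (f 5))) * μ f := by
    rw [eXY, eXZ, eYZ, Finset.mul_sum, Finset.mul_sum, Finset.mul_sum,
      ← Finset.sum_add_distrib, ← Finset.sum_add_distrib]
    exact Finset.sum_congr rfl fun f _ => by ring
  have hR : (4 : ℝ) + 3 * (pm1 s * pm1 t * pm1 u) - 2 * (pm1 s * pm1 t * pm1 u) * Δ' μ =
      ∑ f, ((4 + 3 * (pm1 s * pm1 t * pm1 u)) + (-(2 * (pm1 s * pm1 t * pm1 u))) *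
        (indR (f 0) (f 1) + indR (f 2) (f 3) + indR (f 4) (f 5))) * μ f := by
    rw [← affD μ htot]; ring
  rw [hL, hR]
  refine Finset.sum_le_sum fun f _ => mul_le_mul_of_nonneg_right ?_ (hpos f)
  exact (ptR s t u (f 0) (f 1) (f 2) (f 3) (f 4) (f 5)).trans_eq (by ring)


/-- **Lemma for Leggett–Garg Δ' bounds, direct part.** Every coupling's Δ'
satisfies the four bounds. -/
theorem stmt16 (dXY dXZ dYZ : PairDist) (μ : Cfg6 → ℝ)
    (hμ : IsLGCoupling dXY dXZ dYZ μ) :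
    -(1/2) + s1three dXY.expAB dXZ.expAB dYZ.expAB / 2 ≤ Δ' μ ∧
    (|dXY.expA - dXZ.expA| + |dXY.expB - dYZ.expA| + |dXZ.expB - dYZ.expB|) / 2 ≤ Δ' μ ∧
    Δ' μ ≤ 3 - (-(1/2) + s0three dXY.expAB dXZ.expAB dYZ.expAB / 2) ∧
    Δ' μ ≤ 3 - (|dXY.expA + dXZ.expA| + |dXY.expB + dYZ.expA| +
                |dXZ.expB + dYZ.expB|) / 2 := by
  obtain ⟨hpos, htot, hXY, hXZ, hYZ⟩ := hμ
  have hμ' : IsLGCoupling dXY dXZ dYZ μ := ⟨hpos, htot, hXY, hXZ, hYZ⟩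
  -- sign-pattern bounds
  have B := bound_pattern dXY dXZ dYZ μ hμ'
  have b_ftt := B false true true
  have b_tft := B true false true
  have b_ttf := B true true false
  have b_fff := B false false false
  have b_ttt := B true true true
  have b_tff := B true false false
  have b_ftf := B false true false
  have b_fft := B false false true
  norm_num [pm1] at b_ftt b_tft b_ttf b_fff b_ttt b_tff b_ftf b_fft
  -- expectations of single variables
  have eAXY : dXY.expA = ∑ f, pm1 (f 0) * μ f := marg_sum μ 0 2 dXY.p hXY (fun a _ => pm1 a)
  have eBXY : dXY.expB = ∑ f, pm1 (f 2) * μ f := marg_sum μ 0 2 dXY.p hXY (fun _ b => pm1 b)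
  have eAXZ : dXZ.expA = ∑ f, pm1 (f 1) * μ f := marg_sum μ 1 4 dXZ.p hXZ (fun a _ => pm1 a)
  have eBXZ : dXZ.expB = ∑ f, pm1 (f 4) * μ f := marg_sum μ 1 4 dXZ.p hXZ (fun _ b => pm1 b)
  have eAYZ : dYZ.expA = ∑ f, pm1 (f 3) * μ f := marg_sum μ 3 5 dYZ.p hYZ (fun a _ => pm1 a)
  have eBYZ : dYZ.expB = ∑ f, pm1 (f 5) * μ f := marg_sum μ 3 5 dYZ.p hYZ (fun _ b => pm1 b)
  have absSub : ∀ (e1 e2 : ℝ) (i j : Fin 6) (pr : ℝ),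
      e1 = (∑ f, pm1 (f i) * μ f) → e2 = (∑ f, pm1 (f j) * μ f) →
      pr = (∑ f, indR (f i) (f j) * μ f) →
      |e1 - e2| ≤ 2 * pr := by
    intro e1 e2 i j pr h1 h2 h3
    rw [h1, h2, h3, ← Finset.sum_sub_distrib, Finset.mul_sum]
    calc |∑ f, (pm1 (f i) * μ f - pm1 (f j) * μ f)|
        ≤ ∑ f, |pm1 (f i) * μ f - pm1 (f j) * μ f| := Finset.abs_sum_le_sum_abs _ _
      _ ≤ ∑ f, 2 * (indR (f i) (f j) * μ f) := by
          refine Finset.sum_le_sum fun f _ => ?_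
          rw [← sub_mul, abs_mul, abs_of_nonneg (hpos f), ← mul_assoc]
          exact mul_le_mul_of_nonneg_right (abs_pm1_sub _ _) (hpos f)
  have absAdd : ∀ (e1 e2 : ℝ) (i j : Fin 6) (pr : ℝ),
      e1 = (∑ f, pm1 (f i) * μ f) → e2 = (∑ f, pm1 (f j) * μ f) →
      pr = (∑ f, indR (f i) (f j) * μ f) →
      |e1 + e2| ≤ 2 - 2 * pr := by
    intro e1 e2 i j pr h1 h2 h3
    have key : (2 : ℝ) - 2 * pr = ∑ f, (2 - 2 * indR (f i) (f j)) * μ f := by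
      have : (∑ f, (2 - 2 * indR (f i) (f j)) * μ f)
          = (∑ f, 2 * μ f) - ∑ f, 2 * (indR (f i) (f j) * μ f) := by
        rw [← Finset.sum_sub_distrib]
        exact Finset.sum_congr rfl fun f _ => by ring
      rw [this, ← Finset.mul_sum, htot, h3, Finset.mul_sum]
      simp [mul_assoc]
    rw [h1, h2, ← Finset.sum_add_distrib, key]
    calc |∑ f, (pm1 (f i) * μ f + pm1 (f j) * μ f)|
        ≤ ∑ f, |pm1 (f i) * μ f + pm1 (f j) * μ f| := Finset.abs_sum_le_sum_abs _ _
      _ ≤ ∑ f, (2 - 2 * indR (f i) (f j)) * μ f := by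
          refine Finset.sum_le_sum fun f _ => ?_
          rw [← add_mul, abs_mul, abs_of_nonneg (hpos f)]
          exact mul_le_mul_of_nonneg_right (abs_pm1_add _ _) (hpos f)
  have hx1 := absSub dXY.expA dXZ.expA 0 1 (prNeX μ) eAXY eAXZ (prNeX_eq μ)
  have hy1 := absSub dXY.expB dYZ.expA 2 3 (prNeY μ) eBXY eAYZ (prNeY_eq μ)
  have hz1 := absSub dXZ.expB dYZ.expB 4 5 (prNeZ μ) eBXZ eBYZ (prNeZ_eq μ)
  have hx2 := absAdd dXY.expA dXZ.expA 0 1 (prNeX μ) eAXY eAXZ (prNeX_eq μ)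
  have hy2 := absAdd dXY.expB dYZ.expA 2 3 (prNeY μ) eBXY eAYZ (prNeY_eq μ)
  have hz2 := absAdd dXZ.expB dYZ.expB 4 5 (prNeZ μ) eBXZ eBYZ (prNeZ_eq μ)
  have hD : Δ' μ = prNeX μ + prNeY μ + prNeZ μ := rfl
  refine ⟨?_, ?_, ?_, ?_⟩
  · have hs1 : s1three dXY.expAB dXZ.expAB dYZ.expAB ≤ 1 + 2 * Δ' μ := by
      refine max_le (max_le ?_ ?_) (max_le ?_ ?_) <;> linarith
    linarith
  · linarith
  · have hs0 : s0three dXY.expAB dXZ.expAB dYZ.expAB ≤ 7 - 2 * Δ' μ := by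
      refine max_le (max_le ?_ ?_) (max_le ?_ ?_) <;> linarith
    linarith
  · linarith
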